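/- The nonconvex penalty ψ_K^{nc}(x), defined as the minimum over block partitions of {1,…,N} into at most K contiguous blocks of ∑_k √|B_k|·‖x_{B_k}‖₂, equals the minimum over σ ∈ ℝ^N with ‖Dσ‖₀ ≤ K−1 of ∑_{n=1}^N φ(x_n, σ_n). -/

import Mathlib

open scoped ENNReal

noncomputable def phi (x σ : ℝ) : ℝ≥0∞ :=
  if 0 < σ then ENNReal.ofReal (x ^ 2 / (2 * σ) + σ / 2)
  else if x = 0 ∧ σ = 0 then 0 else ⊤

/-- ψ_K^{nc}(x): minimum over partitions of {0,…,N-1} into at most K contiguous blocks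
(described by cut points 0 = c 0 < c 1 < ⋯ < c j = N) of ∑_k √|B_k|·‖x_{B_k}‖₂. -/
noncomputable def psiNC (K N : ℕ) (x : ℕ → ℝ) : ℝ≥0∞ :=
  ⨅ (j : ℕ) (_ : 1 ≤ j ∧ j ≤ K) (c : ℕ → ℕ)
    (_ : c 0 = 0 ∧ c j = N ∧ StrictMonoOn c (Set.Iic j)),
    ENNReal.ofReal (∑ k ∈ Finset.range j,
      Real.sqrt ((c (k + 1) : ℝ) - (c k : ℝ)) *
        Real.sqrt (∑ n ∈ Finset.Ico (c k) (c (k + 1)), x n ^ 2))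

/-!
For a block `B` and `σ > 0`, `∑_{n ∈ B} φ(x_n, σ) = ‖x_B‖²/(2σ) + |B| σ/2`, which by AM–GM is at
least `√|B| ‖x_B‖₂`, with equality at `σ = ‖x_B‖₂ / √|B|`; for `σ ≤ 0` the sum is `∞` unless
`x_B = 0`. A `σ` with at most `K - 1` jumps among its first `N` entries is constant on the blocks of
a partition of `{0, …, N - 1}` into at most `K` blocks, and every such partition arises this way, so
minimising over `σ` is minimising over partitions and then over one constant per block.
-/

open Finset

lemma phi_of_pos {x σ : ℝ} (hσ : 0 < σ) :
    phi x σ = ENNReal.ofReal (x ^ 2 / (2 * σ) + σ / 2) :=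
  if_pos hσ

lemma phi_of_nonpos_of_ne_zero {x σ : ℝ} (hσ : σ ≤ 0) (hx : x ≠ 0) : phi x σ = ⊤ := by
  simp [phi, hσ.not_gt, hx]

lemma phi_zero_zero : phi 0 0 = 0 := by
  simp [phi]

section Block

variable {ι : Type*} (s : Finset ι) (x : ι → ℝ)

lemma sum_phi_of_pos {σ : ℝ} (hσ : 0 < σ) :
    ∑ n ∈ s, phi (x n) σ = ENNReal.ofReal ((∑ n ∈ s, x n ^ 2) / (2 * σ) + #s * σ / 2) := by
  have hsum : (∑ n ∈ s, x n ^ 2) / (2 * σ) + #s * σ / 2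
      = ∑ n ∈ s, (x n ^ 2 / (2 * σ) + σ / 2) := by
    rw [sum_add_distrib, ← sum_div, sum_const, nsmul_eq_mul, mul_div_assoc]
  rw [hsum, ENNReal.ofReal_sum_of_nonneg fun n _ => by positivity]
  exact sum_congr rfl fun n _ => phi_of_pos hσ

lemma sqrt_mul_sqrt_le_div_add_mul {m S σ : ℝ} (hm : 0 ≤ m) (hS : 0 ≤ S) (hσ : 0 < σ) :
    √m * √S ≤ S / (2 * σ) + m * σ / 2 := by
  rw [div_add_div _ _ (by positivity) two_ne_zero, le_div_iff₀ (by positivity)]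
  have h := sq_nonneg (√S - σ * √m)
  rw [sub_sq, mul_pow, Real.sq_sqrt hm, Real.sq_sqrt hS] at h
  nlinarith

lemma div_add_mul_eq_sqrt_mul_sqrt {m S : ℝ} (hm : 0 < m) (hS : 0 < S) :
    S / (2 * (√S / √m)) + m * (√S / √m) / 2 = √m * √S := by
  have hsm := Real.sqrt_pos.2 hm
  have hsS := Real.sqrt_pos.2 hS
  field_simp
  rw [Real.sq_sqrt hm.le, Real.sq_sqrt hS.le]
  ring

theorem ofReal_sqrt_card_mul_le_sum_phi (σ : ℝ) :
    ENNReal.ofReal (√(#s : ℝ) * √(∑ n ∈ s, x n ^ 2)) ≤ ∑ n ∈ s, phi (x n) σ := by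
  rcases lt_or_ge 0 σ with hσ | hσ
  · rw [sum_phi_of_pos s x hσ]
    exact ENNReal.ofReal_le_ofReal <|
      sqrt_mul_sqrt_le_div_add_mul (Nat.cast_nonneg _) (sum_nonneg fun n _ => sq_nonneg _) hσ
  by_cases hx : ∃ n ∈ s, x n ≠ 0
  · obtain ⟨n, hn, hxn⟩ := hx
    rw [ENNReal.sum_eq_top.2 ⟨n, hn, phi_of_nonpos_of_ne_zero hσ hxn⟩]
    exact le_top
  · push Not at hx
    have hS : ∑ n ∈ s, x n ^ 2 = 0 := sum_eq_zero fun n hn => by simp [hx n hn]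
    simp [hS]

theorem sum_phi_sqrt_div_sqrt_card :
    ∑ n ∈ s, phi (x n) (√(∑ n ∈ s, x n ^ 2) / √(#s : ℝ))
      = ENNReal.ofReal (√(#s : ℝ) * √(∑ n ∈ s, x n ^ 2)) := by
  rcases (sum_nonneg fun n (_ : n ∈ s) => sq_nonneg (x n)).eq_or_lt with hS | hS
  · have hx : ∀ n ∈ s, x n = 0 := fun n hn =>
      pow_eq_zero_iff two_ne_zero |>.1 <|
        (sum_eq_zero_iff_of_nonneg fun n _ => sq_nonneg (x n)).1 hS.symm n hn
    rw [← hS, Real.sqrt_zero, zero_div, mul_zero, ENNReal.ofReal_zero]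
    exact sum_eq_zero fun n hn => by rw [hx n hn, phi_zero_zero]
  · have hs : (0 : ℝ) < #s := by exact_mod_cast card_pos.2 (nonempty_of_sum_ne_zero hS.ne')
    rw [sum_phi_of_pos s x (div_pos (Real.sqrt_pos.2 hS) (Real.sqrt_pos.2 hs)),
      div_add_mul_eq_sqrt_mul_sqrt hs hS]

end Block

def IsBlockPartition (N j : ℕ) (c : ℕ → ℕ) : Prop :=
  c 0 = 0 ∧ c j = N ∧ StrictMonoOn c (Set.Iic j)

noncomputable def blockCost (x : ℕ → ℝ) (a b : ℕ) : ℝ≥0∞ :=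
  ENNReal.ofReal (√(#(Ico a b) : ℝ) * √(∑ n ∈ Ico a b, x n ^ 2))

namespace IsBlockPartition

variable {N j : ℕ} {c : ℕ → ℕ} (hc : IsBlockPartition N j c)
include hc

lemma apply_lt_apply_succ {k : ℕ} (hk : k < j) : c k < c (k + 1) :=
  hc.2.2 (Set.mem_Iic.2 hk.le) (Set.mem_Iic.2 hk) k.lt_succ_self

lemma apply_le {k : ℕ} (hk : k ≤ j) : c k ≤ N :=
  hc.2.1 ▸ hc.2.2.monotoneOn (Set.mem_Iic.2 hk) (Set.mem_Iic.2 le_rfl) hk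

lemma sum_range_eq_sum_blocks {M : Type*} [AddCommMonoid M] (f : ℕ → M) :
    ∑ n ∈ range N, f n = ∑ k ∈ range j, ∑ n ∈ Ico (c k) (c (k + 1)), f n := by
  suffices ∀ i ≤ j, ∑ n ∈ Ico 0 (c i), f n = ∑ k ∈ range i, ∑ n ∈ Ico (c k) (c (k + 1)), f n by
    rw [range_eq_Ico, ← hc.2.1, this j le_rfl]
  intro i hi
  induction i with
  | zero => simp [hc.1]
  | succ i ih =>
    rw [sum_range_succ, ← ih (by omega),
      sum_Ico_consecutive _ (Nat.zero_le _) (hc.apply_lt_apply_succ (by omega)).le]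

lemma exists_mem_Ico {n : ℕ} (hn : n < N) : ∃ k < j, n ∈ Ico (c k) (c (k + 1)) := by
  have : n ∈ Set.Ico (c 0) (c j) := by rw [hc.1, hc.2.1]; exact ⟨n.zero_le, hn⟩
  obtain ⟨k, hkc, hk, hnk⟩ : ∃ k, c k ≤ n ∧ k < j ∧ n < c (k + 1) := by
    simpa using Ico_subset_biUnion_Ico j c this
  exact ⟨k, hk, mem_Ico.2 ⟨hkc, hnk⟩⟩

lemma findGreatest_eq {k n : ℕ} (hk : k < j) (hn : n ∈ Ico (c k) (c (k + 1))) :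
    Nat.findGreatest (c · ≤ n) j = k := by
  rw [mem_Ico] at hn
  refine Nat.findGreatest_eq_iff.2 ⟨hk.le, fun _ => hn.1, fun m hkm hmj hcm => ?_⟩
  have := hc.2.2.monotoneOn (Set.mem_Iic.2 (show k + 1 ≤ j from hk)) (Set.mem_Iic.2 hmj) hkm
  omega

end IsBlockPartition

lemma psiNC_eq_iInf (K N : ℕ) (x : ℕ → ℝ) :
    psiNC K N x = ⨅ (j : ℕ) (_ : 1 ≤ j ∧ j ≤ K) (c : ℕ → ℕ) (_ : IsBlockPartition N j c),
      ∑ k ∈ range j, blockCost x (c k) (c (k + 1)) := by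
  refine iInf_congr fun j => iInf_congr fun _ => iInf_congr fun c => iInf_congr fun hc => ?_
  rw [ENNReal.ofReal_sum_of_nonneg fun k _ => by positivity]
  refine sum_congr rfl fun k hk => ?_
  have hck := IsBlockPartition.apply_lt_apply_succ hc (mem_range.1 hk)
  rw [blockCost, Nat.card_Ico, Nat.cast_sub hck.le]

lemma apply_eq_of_mem_Ico {α : Type*} {f : ℕ → α} {a b : ℕ}
    (h : ∀ i, a ≤ i → i + 1 < b → f (i + 1) = f i) : ∀ n ∈ Ico a b, f n = f a := by
  intro n hn
  rw [mem_Ico] at hn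
  induction n, hn.1 using Nat.le_induction with
  | base => rfl
  | succ n han ih => rw [h n han hn.2, ih ⟨han, by omega⟩]

section Jumps

variable {α : Type*} [DecidableEq α]

def jumpSet (N : ℕ) (σ : ℕ → α) : Finset ℕ :=
  (range (N - 1)).filter fun i => σ (i + 1) ≠ σ i

lemma isBlockPartition_nth {N : ℕ} (T : Finset ℕ) (h0 : 0 ∈ T) (hN : N ∈ T) :
    IsBlockPartition N (Nat.count (· ∈ T) N) (Nat.nth (· ∈ T)) := by
  have hf : (Set.ofPred (· ∈ T)).Finite := T.finite_toSet
  refine ⟨Nat.nth_zero_of_zero h0, Nat.nth_count hN, (Nat.nth_strictMonoOn hf).mono ?_⟩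
  exact Set.Iic_subset_Iio.2 (Nat.count_lt_card hf hN)

lemma exists_isBlockPartition_of_jumpSet {N : ℕ} (hN : 0 < N) (σ : ℕ → α) :
    ∃ j c, 1 ≤ j ∧ j ≤ #(jumpSet N σ) + 1 ∧ IsBlockPartition N j c ∧
      ∀ k < j, ∀ n ∈ Ico (c k) (c (k + 1)), σ n = σ (c k) := by
  -- The cut points: `0`, `N` and every `i + 1` with `σ (i + 1) ≠ σ i`, in increasing order.
  set T := insert 0 (insert N ((jumpSet N σ).image (· + 1)))
  have hc := isBlockPartition_nth (N := N) T (by simp [T]) (by simp [T])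
  refine ⟨_, _, ?_, ?_, hc, fun k hk => apply_eq_of_mem_Ico fun i hki hib => ?_⟩
  · rw [Nat.count_eq_card_filter_range]
    exact card_pos.2 ⟨0, by simp [T, hN]⟩
  · rw [Nat.count_eq_card_filter_range]
    calc #{n ∈ range N | n ∈ T} ≤ #(insert 0 ((jumpSet N σ).image (· + 1))) := by
          refine card_le_card fun n hn => ?_
          simp only [T, mem_filter, mem_range, mem_insert] at hn ⊢
          obtain ⟨hnN, rfl | rfl | h⟩ := hn
          exacts [Or.inl rfl, absurd hnN (lt_irrefl _), Or.inr h]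
      _ ≤ #(jumpSet N σ) + 1 := (card_insert_le _ _).trans (by grw [card_image_le])
  · by_contra hne
    have hiN := hc.apply_le (show k + 1 ≤ _ from hk)
    have hiT : i + 1 ∈ T := by
      simp only [T, mem_insert, mem_image]
      exact Or.inr (Or.inr ⟨i, by simp [jumpSet, hne]; omega, rfl⟩)
    have := Nat.le_nth_of_lt_nth_succ hib hiT
    omega

lemma IsBlockPartition.exists_card_jumpSet_le {N j : ℕ} {c : ℕ → ℕ} (hc : IsBlockPartition N j c)
    (v : ℕ → α) : ∃ σ : ℕ → α, #(jumpSet N σ) ≤ j - 1 ∧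
      ∀ k < j, ∀ n ∈ Ico (c k) (c (k + 1)), σ n = v k := by
  set σ : ℕ → α := fun n => v (Nat.findGreatest (c · ≤ n) j)
  have hσ : ∀ k < j, ∀ n ∈ Ico (c k) (c (k + 1)), σ n = v k := fun k hk n hn => by
    simp only [σ, hc.findGreatest_eq hk hn]
  refine ⟨σ, ?_, hσ⟩
  calc #(jumpSet N σ) ≤ #((Ico 1 j).image (c · - 1)) := card_le_card fun i hi => ?_
    _ ≤ #(Ico 1 j) := card_image_le
    _ = j - 1 := Nat.card_Ico 1 j
  simp only [jumpSet, mem_filter, mem_range] at hi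
  obtain ⟨k, hk, hik⟩ := hc.exists_mem_Ico (show i < N by omega)
  have hcut : c (k + 1) = i + 1 := by
    by_contra h
    have hik' : i + 1 ∈ Ico (c k) (c (k + 1)) := by rw [mem_Ico] at hik ⊢; omega
    exact hi.2 (by rw [hσ k hk _ hik, hσ k hk _ hik'])
  have hkj : k + 1 < j := lt_of_le_of_ne hk fun h => by
    have := hc.2.1
    rw [← h, hcut] at this
    omega
  exact mem_image.2 ⟨k + 1, mem_Ico.2 ⟨by omega, hkj⟩, by omega⟩

end Jumps

/-- ψ_K^{nc}(x) equals the minimum over σ with ‖Dσ‖₀ ≤ K − 1 of ∑ φ(x_n, σ_n). -/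
theorem psiNC_eq_latent (K N : ℕ) (hK : 1 ≤ K) (hN : 1 ≤ N) (x : ℕ → ℝ) :
    psiNC K N x =
      ⨅ (σ : ℕ → ℝ)
        (_ : ((Finset.range (N - 1)).filter (fun i => σ (i + 1) ≠ σ i)).card ≤ K - 1),
        ∑ n ∈ Finset.range N, phi (x n) (σ n) := by
  rw [psiNC_eq_iInf]
  apply le_antisymm
  · refine le_iInf₂ fun σ (hσ : #(jumpSet N σ) ≤ K - 1) => ?_
    obtain ⟨j, c, hj, hjσ, hc, hconst⟩ := exists_isBlockPartition_of_jumpSet hN σ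
    calc _ ≤ ∑ k ∈ range j, blockCost x (c k) (c (k + 1)) :=
          iInf₂_le_of_le j ⟨hj, by omega⟩ (iInf₂_le c hc)
      _ ≤ ∑ k ∈ range j, ∑ n ∈ Ico (c k) (c (k + 1)), phi (x n) (σ (c k)) :=
          sum_le_sum fun k _ => ofReal_sqrt_card_mul_le_sum_phi _ x _
      _ = ∑ n ∈ range N, phi (x n) (σ n) := by
          rw [hc.sum_range_eq_sum_blocks]
          refine sum_congr rfl fun k hk => sum_congr rfl fun n hn => ?_
          rw [hconst k (mem_range.1 hk) n hn]
  · refine le_iInf₂ fun j hj => le_iInf₂ fun c hc => ?_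
    obtain ⟨σ, hσ, hval⟩ := hc.exists_card_jumpSet_le
      fun k => √(∑ n ∈ Ico (c k) (c (k + 1)), x n ^ 2) / √(#(Ico (c k) (c (k + 1))) : ℝ)
    calc _ ≤ ∑ n ∈ range N, phi (x n) (σ n) := iInf₂_le σ (show #(jumpSet N σ) ≤ K - 1 by omega)
      _ = ∑ k ∈ range j, blockCost x (c k) (c (k + 1)) := by
          rw [hc.sum_range_eq_sum_blocks]
          refine sum_congr rfl fun k hk => ?_
          rw [sum_congr rfl fun n hn => by rw [hval k (mem_range.1 hk) n hn]]
          exact sum_phi_sqrt_div_sqrt_card _ x
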